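/- Let A and B be finite alphabets with zero symbols, let Y ⊆ B^{ℤ³} be a subshift of finite type containing the all-zero configuration, and let φ : Y → A^{ℤ³} be a continuous shift-equivariant map with image X = φ(Y), such that φ maps the all-zero configuration to the all-zero configuration and the all-zero configuration of B^{ℤ³} is the only φ-preimage of the all-zero configuration of A^{ℤ³} (i.e. φ is a 0-to-0 SFT cover of the sofic shift X). Then there exists r ∈ ℕ such that X is r-zero-gluing with respect to the ℓ∞ metric on ℤ³. -/

import Mathlib

/-- The group `ℤ³`. -/
abbrev V3 : Type := ℤ × ℤ × ℤ

/-- The product topology on configurations `ι → A`, where the alphabet `A`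
carries the discrete topology. -/
def prodTop (ι A : Type) : TopologicalSpace (ι → A) :=
  @Pi.topologicalSpace ι (fun _ => A) (fun _ => ⊥)

/-- The shift action: `(σ_v x)_u = x_{u - v}`. -/
def shift {ι A : Type} [Sub ι] (v : ι) (x : ι → A) : ι → A := fun u => x (u - v)

/-- A subshift: a closed, shift-invariant set of configurations. -/
def IsSubshift {ι A : Type} [Sub ι] (X : Set (ι → A)) : Prop :=
  @IsClosed _ (prodTop ι A) X ∧ ∀ (v : ι), ∀ x ∈ X, shift v x ∈ X

/-- A subshift of finite type: defined by a finite set `F` of forbidden patterns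
on a finite domain `D`. -/
def IsSFT {ι A : Type} [Add ι] (X : Set (ι → A)) : Prop :=
  ∃ (D : Finset ι) (F : Set (↥D → A)),
    X = {x : ι → A | ∀ v : ι, (fun u : ↥D => x (v + (u : ι))) ∉ F}

/-- The subspace topology on a set of configurations. -/
def subTop {ι A : Type} (X : Set (ι → A)) : TopologicalSpace ↥X :=
  TopologicalSpace.induced Subtype.val (prodTop ι A)

/-- The ℤ-trace (projective ℤ-subdynamics) of a three-dimensional subshift. -/
def trace {A : Type} (X : Set (V3 → A)) : Set (ℤ → A) :=
  {y : ℤ → A | ∃ x ∈ X, ∀ n : ℤ, y n = x (0, 0, n)}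

/-- `spa z Y`: the least `k` such that `Y` is `k`-sparse (`⊤` if there is none). -/
noncomputable def spa {A : Type} (z : A) (Y : Set (ℤ → A)) : ℕ∞ :=
  sInf {k : ℕ∞ | ∀ y ∈ Y, {n : ℤ | y n ≠ z}.encard ≤ k}

/-- `ES z Y`: essential sparseness, the least `k` such that for some radius `r`,
the support of every `y ∈ Y` is covered by `k` intervals of radius `r`
(`⊤` if there is none). -/
noncomputable def ES {A : Type} (z : A) (Y : Set (ℤ → A)) : ℕ∞ :=
  sInf {k : ℕ∞ | ∃ r : ℕ, ∀ y ∈ Y, ∃ N : Set ℤ,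
    N.encard ≤ k ∧ ∀ n : ℤ, y n ≠ z → ∃ m ∈ N, |n - m| ≤ (r : ℤ)}

/-- Vertical determinism: two configurations agreeing on the lower half-space
`{(i,j,k) : k < 0}` are equal. -/
def VertDet {A : Type} (X : Set (V3 → A)) : Prop :=
  ∀ x ∈ X, ∀ y ∈ X, (∀ v : V3, v.2.2 < 0 → x v = y v) → x = y

/-- A 0-to-0 conjugacy between pointed three-dimensional subshifts:
a shift-equivariant homeomorphism sending the all-zero configuration to
the all-zero configuration (both subshifts contain their all-zero configurations). -/
def ZeroConj {A B : Type} (zA : A) (zB : B)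
    (X : Set (V3 → A)) (X' : Set (V3 → B)) : Prop :=
  ((fun _ => zA) ∈ X) ∧ ((fun _ => zB) ∈ X') ∧
  ∃ φ : @Homeomorph ↥X ↥X' (subTop X) (subTop X'),
    (∀ (v : V3) (x : ↥X) (h : shift v x.1 ∈ X),
      (φ ⟨shift v x.1, h⟩).1 = shift v (φ x).1) ∧
    (∀ x : ↥X, x.1 = (fun _ => zA) → (φ x).1 = (fun _ => zB))

/-- `α(X) = spa(T(X))`. -/
noncomputable def alphaInv {A : Type} (z : A) (X : Set (V3 → A)) : ℕ∞ :=
  spa z (trace X)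

/-- `β(X) = ES(T(X))`. -/
noncomputable def betaInv {A : Type} (z : A) (X : Set (V3 → A)) : ℕ∞ :=
  ES z (trace X)

/-- `underline-α(X)`: the infimum of `α(X')` over all subshifts `X'`
0-to-0 conjugate to `X`. -/
noncomputable def ulAlpha {A : Type} (zA : A) (X : Set (V3 → A)) : ℕ∞ :=
  sInf {k : ℕ∞ | ∃ (B : Type) (_ : Fintype B) (zB : B) (X' : Set (V3 → B)),
    IsSubshift X' ∧ ZeroConj zA zB X X' ∧ alphaInv zB X' = k}

/-- `underline-β(X)`: the infimum of `β(X')` over all subshifts `X'`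
0-to-0 conjugate to `X`. -/
noncomputable def ulBeta {A : Type} (zA : A) (X : Set (V3 → A)) : ℕ∞ :=
  sInf {k : ℕ∞ | ∃ (B : Type) (_ : Fintype B) (zB : B) (X' : Set (V3 → B)),
    IsSubshift X' ∧ ZeroConj zA zB X X' ∧ betaInv zB X' = k}

/-- `overline-β(X)`: the supremum of `β(X')` over all subshifts `X'`
0-to-0 conjugate to `X`. -/
noncomputable def olBeta {A : Type} (zA : A) (X : Set (V3 → A)) : ℕ∞ :=
  sSup {k : ℕ∞ | ∃ (B : Type) (_ : Fintype B) (zB : B) (X' : Set (V3 → B)),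
    IsSubshift X' ∧ ZeroConj zA zB X X' ∧ betaInv zB X' = k}

/-- Directions of the faces of a Wang cube: `(i, true)` is `+eᵢ`, `(i, false)` is `-eᵢ`. -/
abbrev Dir : Type := Fin 3 × Bool

/-- The standard basis vectors of `ℤ³`. -/
def unitV : Fin 3 → V3 := ![(1, 0, 0), (0, 1, 0), (0, 0, 1)]

/-- The vector of a direction. -/
def dirVec (s : Dir) : V3 := if s.2 then unitV s.1 else -unitV s.1

/-- The opposite direction. -/
def opp (s : Dir) : Dir := (s.1, !s.2)

/-- The zero cube: all six faces have the zero color. -/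
def zeroCube {C : Type} (z : C) : Dir → C := fun _ => z

/-- The set of valid tilings by a finite set `W` of Wang cubes: colors of
matching faces of adjacent cubes agree. -/
def WangTilings {C : Type} (W : Finset (Dir → C)) :
    Set (V3 → {w : Dir → C // w ∈ W}) :=
  {x | ∀ (v : V3) (s : Dir), (x v).1 s = (x (v + dirVec s)).1 (opp s)}

/-- ℓ∞ distance on `ℤ³`. -/
def dinf (u w : V3) : ℤ :=
  max |u.1 - w.1| (max |u.2.1 - w.2.1| |u.2.2 - w.2.2|)

/-- Reachability in the graph on the support of `x` with edges between
cells at ℓ∞-distance at most `r`. -/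
def Reach {A : Type} (z : A) (r : ℕ) (x : V3 → A) : V3 → V3 → Prop :=
  Relation.ReflTransGen (fun u w => x u ≠ z ∧ x w ≠ z ∧ dinf u w ≤ (r : ℤ))

/-- `y` is an `r`-connected component configuration of `x`: it agrees with `x`
on one `r`-connected component of the support of `x` and is zero elsewhere. -/
def IsCompConf {A : Type} (z : A) (r : ℕ) (x y : V3 → A) : Prop :=
  ∃ v₀ : V3, x v₀ ≠ z ∧
    (∀ u : V3, (x u ≠ z ∧ Reach z r x v₀ u) → y u = x u) ∧
    (∀ u : V3, ¬(x u ≠ z ∧ Reach z r x v₀ u) → y u = z)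

/-- A set of configurations is `r`-zero-gluing if membership is equivalent to
membership of all `r`-connected component configurations. -/
def IsZeroGluing {A : Type} (z : A) (r : ℕ) (X : Set (V3 → A)) : Prop :=
  ∀ x : V3 → A, x ∈ X ↔ ∀ y : V3 → A, IsCompConf z r x y → y ∈ X

/-- The `r`-zero-gluing closure of `X`: the intersection of all `r`-zero-gluing
subshifts containing `X`. -/
def ZGC {A : Type} (z : A) (r : ℕ) (X : Set (V3 → A)) : Set (V3 → A) :=
  ⋂₀ {Y : Set (V3 → A) | IsSubshift Y ∧ IsZeroGluing z r Y ∧ X ⊆ Y}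


/-!
The cover `φ` is a sliding block code with some radius `R`, membership in `Y` is checked on
windows of some radius `m`, and, because `0` is the only preimage of `0`, compactness gives a
radius `n` such that every nonzero symbol of a preimage `y` lies within `n` of a nonzero symbol
of `φ y`. For `r ≥ 2 (m + n + R)`, the `n`-neighbourhoods of distinct `r`-components of the
support of `x = φ y` are so far apart that no window of radius `m` or `R` meets two of them.
Hence preimages can be cut and pasted component by component: restricting a preimage of `x`
to the neighbourhood of one component gives a preimage of that component configuration, and
pasting preimages of all component configurations gives a preimage of `x`.
-/

open Set

lemma dinf_comm (u w : V3) : dinf u w = dinf w u := by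
  simp [dinf, abs_sub_comm]

lemma dinf_self (u : V3) : dinf u u = 0 := by
  simp [dinf]

lemma dinf_add_left_self (p u : V3) : dinf (p + u) p = dinf u 0 := by
  simp [dinf]

lemma dinf_triangle (a b c : V3) : dinf a c ≤ dinf a b + dinf b c := by
  unfold dinf
  refine max_le ?_ (max_le ?_ ?_)
  · exact (abs_sub_le _ b.1 _).trans (add_le_add (by simp) (by simp))
  · exact (abs_sub_le _ b.2.1 _).trans (add_le_add (by simp) (by simp))
  · exact (abs_sub_le _ b.2.2 _).trans (add_le_add (by simp) (by simp))

lemma shift_neg_apply {α : Type} (p v : V3) (y : V3 → α) : shift (-p) y v = y (p + v) := by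
  simp [shift, add_comm]

def cube (p : V3) (k : ℕ) : Set V3 := {u | dinf u p ≤ k}

lemma cube_mono {p : V3} {k l : ℕ} (h : k ≤ l) : cube p k ⊆ cube p l :=
  fun u (hu : dinf u p ≤ k) => show dinf u p ≤ l from hu.trans (by exact_mod_cast h)

lemma mem_cube_toNat (u p : V3) : u ∈ cube p (dinf u p).toNat :=
  Int.self_le_toNat _

lemma eqOn_shift_neg {α : Type} {y y' : V3 → α} {p : V3} {k : ℕ}
    (h : EqOn y y' (cube p k)) : EqOn (shift (-p) y) (shift (-p) y') (cube 0 k) := by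
  intro v hv
  rw [shift_neg_apply, shift_neg_apply]
  refine h ?_
  show dinf (p + v) p ≤ k
  rwa [dinf_add_left_self]

def IsWindowRadius {B : Type} (Y : Set (V3 → B)) (m : ℕ) : Prop :=
  ∀ z : V3 → B, (∀ p, ∃ y ∈ Y, EqOn z y (cube p m)) → z ∈ Y

def IsLocalRadius {A B : Type} (φ : (V3 → B) → (V3 → A)) (Y : Set (V3 → B)) (R : ℕ) :
    Prop :=
  ∀ p, ∀ y ∈ Y, ∀ y' ∈ Y, EqOn y y' (cube p R) → φ y p = φ y' p

def IsDetectionRadius {A B : Type} (zA : A) (zB : B) (φ : (V3 → B) → (V3 → A))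
    (Y : Set (V3 → B)) (n : ℕ) : Prop :=
  ∀ p, ∀ y ∈ Y, y p ≠ zB → ∃ v ∈ cube p n, φ y v ≠ zA

namespace IsSFT

variable {B : Type} {Y : Set (V3 → B)}

lemma shift_mem (hY : IsSFT Y) : ∀ v, ∀ y ∈ Y, shift v y ∈ Y := by
  obtain ⟨D, F, rfl⟩ := hY
  intro v y hy w
  convert hy (w - v) using 3 with u
  simp only [shift]
  congr 1
  abel

lemma isClosed [TopologicalSpace B] [DiscreteTopology B] (hY : IsSFT Y) : IsClosed Y := by
  obtain ⟨D, F, rfl⟩ := hY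
  simp only [ofPred_forall]
  exact isClosed_iInter fun v => (isClosed_discrete Fᶜ).preimage
    (f := fun x : V3 → B => fun u : D => x (v + u)) (continuous_pi fun u => continuous_apply _)

lemma exists_isWindowRadius (hY : IsSFT Y) : ∃ m, IsWindowRadius Y m := by
  obtain ⟨D, F, rfl⟩ := hY
  refine ⟨D.sup fun u => (dinf u 0).toNat, fun z hz v => ?_⟩
  obtain ⟨y, hy, hzy⟩ := hz v
  convert hy v using 3 with u
  refine hzy ?_
  show dinf (v + u) v ≤ _
  rw [dinf_add_left_self]
  exact (mem_cube_toNat _ _).trans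
    (by exact_mod_cast Finset.le_sup (f := fun u => (dinf u 0).toNat) u.2)

end IsSFT

section Compactness

lemma IsCompact.exists_forall_notMem_of_antitone {X : Type*} [TopologicalSpace X] {K : Set X}
    (hK : IsCompact K) {T : ℕ → Set X} (hT : ∀ k, IsClosed (T k)) (hanti : Antitone T)
    (h : ∀ x ∈ K, ∃ k, x ∉ T k) : ∃ k, ∀ x ∈ K, x ∉ T k := by
  have hempty : K ∩ ⋂ k, T k = ∅ := eq_empty_of_forall_notMem fun x ⟨hx, hxT⟩ =>
    let ⟨k, hk⟩ := h x hx
    hk (mem_iInter.1 hxT k)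
  obtain ⟨k, hk⟩ := hK.elim_directed_family_closed T hT hempty hanti.directed_ge
  exact ⟨k, fun x hx hxT => (eq_empty_iff_forall_notMem.1 hk) x ⟨hx, hxT⟩⟩

variable {A B : Type} [TopologicalSpace A] [DiscreteTopology A] [TopologicalSpace B]
  [DiscreteTopology B] [Finite B] {Y : Set (V3 → B)} {φ : (V3 → B) → (V3 → A)}

lemma exists_apply_zero_eq_of_eqOn_cube (hY : IsClosed Y) (hφ : ContinuousOn φ Y) :
    ∃ R : ℕ, ∀ y ∈ Y, ∀ y' ∈ Y, EqOn y y' (cube 0 R) → φ y 0 = φ y' 0 := by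
  have hφ0 : ContinuousOn (fun q : (V3 → B) × (V3 → B) => (φ q.1 0, φ q.2 0)) (Y ×ˢ Y) :=
    (((continuous_apply 0).comp_continuousOn hφ).comp continuousOn_fst fun _ hq => hq.1).prodMk
      (((continuous_apply 0).comp_continuousOn hφ).comp continuousOn_snd fun _ hq => hq.2)
  have hbad : IsCompact (Y ×ˢ Y ∩ (fun q => (φ q.1 0, φ q.2 0)) ⁻¹' {a | a.1 ≠ a.2}) :=
    (hφ0.preimage_isClosed_of_isClosed (hY.prod hY) (isClosed_discrete _)).isCompact
  have hclosed (R : ℕ) : IsClosed {q : (V3 → B) × (V3 → B) | EqOn q.1 q.2 (cube 0 R)} := by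
    simp only [EqOn, ofPred_forall]
    exact isClosed_iInter fun u => isClosed_iInter fun _ =>
      isClosed_eq (by fun_prop) (by fun_prop)
  obtain ⟨R, hR⟩ := hbad.exists_forall_notMem_of_antitone hclosed
    (fun _ _ hkl _ hq => hq.mono (cube_mono hkl)) fun q ⟨_, hne⟩ => by
      obtain ⟨u, hu⟩ : ∃ u, q.1 u ≠ q.2 u := Function.ne_iff.1 fun hq => hne (by simp [hq])
      exact ⟨_, fun hq => hu (hq (mem_cube_toNat u 0))⟩
  exact ⟨R, fun y hy y' hy' hyy' =>
    by_contra fun hne => hR (y, y') ⟨⟨hy, hy'⟩, hne⟩ hyy'⟩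

lemma exists_isLocalRadius (hY : IsClosed Y) (hsh : ∀ v, ∀ y ∈ Y, shift v y ∈ Y)
    (hφ : ContinuousOn φ Y) (hequiv : ∀ v, ∀ y ∈ Y, φ (shift v y) = shift v (φ y)) :
    ∃ R, IsLocalRadius φ Y R := by
  obtain ⟨R, hR⟩ := exists_apply_zero_eq_of_eqOn_cube hY hφ
  refine ⟨R, fun p y hy y' hy' hyy' => ?_⟩
  have h := hR _ (hsh (-p) y hy) _ (hsh (-p) y' hy') (eqOn_shift_neg hyy')
  rwa [hequiv _ _ hy, hequiv _ _ hy', shift_neg_apply, shift_neg_apply, add_zero] at h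

lemma exists_apply_ne_of_apply_zero_ne (zA : A) (zB : B) (hY : IsClosed Y) (hφ : ContinuousOn φ Y)
    (hinj : ∀ y ∈ Y, φ y = (fun _ => zA) → y = (fun _ => zB)) :
    ∃ n : ℕ, ∀ y ∈ Y, y 0 ≠ zB → ∃ v ∈ cube 0 n, φ y v ≠ zA := by
  have hK : IsCompact (Y ∩ (fun y => y 0) ⁻¹' {zB}ᶜ) :=
    (hY.inter ((isClosed_discrete _).preimage (continuous_apply 0))).isCompact
  obtain ⟨n, hn⟩ := hK.exists_forall_notMem_of_antitone
    (T := fun n => Y ∩ φ ⁻¹' (cube 0 n).pi fun _ => {zA})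
    (fun n => hφ.preimage_isClosed_of_isClosed hY (isClosed_set_pi fun _ _ => isClosed_discrete _))
    (fun _ _ hkl _ hy => ⟨hy.1, fun v hv => hy.2 v (cube_mono hkl hv)⟩)
    fun y ⟨hy, hy0⟩ => by
      obtain ⟨v, hv⟩ : ∃ v, φ y v ≠ zA :=
        Function.ne_iff.1 fun hφy => hy0 (by simp [hinj y hy hφy])
      exact ⟨_, fun hyn => hv (hyn.2 v (mem_cube_toNat v 0))⟩
  refine ⟨n, fun y hy hy0 => ?_⟩
  by_contra! hzero
  exact hn y ⟨hy, hy0⟩ ⟨hy, hzero⟩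

lemma exists_isDetectionRadius (zA : A) (zB : B) (hY : IsClosed Y)
    (hsh : ∀ v, ∀ y ∈ Y, shift v y ∈ Y) (hφ : ContinuousOn φ Y)
    (hequiv : ∀ v, ∀ y ∈ Y, φ (shift v y) = shift v (φ y))
    (hinj : ∀ y ∈ Y, φ y = (fun _ => zA) → y = (fun _ => zB)) :
    ∃ n, IsDetectionRadius zA zB φ Y n := by
  obtain ⟨n, hn⟩ := exists_apply_ne_of_apply_zero_ne zA zB hY hφ hinj
  refine ⟨n, fun p y hy hyp => ?_⟩
  obtain ⟨v, hv, hφv⟩ := hn _ (hsh (-p) y hy) (by rwa [shift_neg_apply, add_zero])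
  rw [hequiv _ _ hy, shift_neg_apply] at hφv
  refine ⟨p + v, ?_, hφv⟩
  show dinf (p + v) p ≤ n
  rwa [dinf_add_left_self]

end Compactness

section Patch

variable {A B : Type} {zB : B} {Y : Set (V3 → B)} {P : V3 → Prop} {n r : ℕ}
  {c : V3 → V3 → B}

structure IsCoherentFamily (Y : Set (V3 → B)) (zB : B) (P : V3 → Prop) (n r : ℕ)
    (c : V3 → V3 → B) : Prop where
  mem : ∀ v, P v → c v ∈ Y
  eq_of_dinf_le : ∀ v w, P v → P w → dinf v w ≤ r → c v = c w
  exists_near_of_ne : ∀ v u, P v → c v u ≠ zB → ∃ w, P w ∧ dinf u w ≤ n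

variable (zB P n c) in
open Classical in
/-- For a coherent family the choice of the nearby point `v` is immaterial
(`IsCoherentFamily.eqOn_patch`). -/
noncomputable def patch : V3 → B := fun u =>
  if h : ∃ v, P v ∧ dinf u v ≤ n then c h.choose u else zB

lemma IsCoherentFamily.eqOn_patch (hc : IsCoherentFamily Y zB P n r c) {k : ℕ}
    (hk : 2 * n + 2 * k ≤ r) {p v : V3} (hv : P v) (hpv : dinf p v ≤ n + k) :
    EqOn (patch zB P n c) (c v) (cube p k) := by
  intro u (hu : dinf u p ≤ k)
  unfold patch
  split_ifs with h
  · obtain ⟨hw, huw⟩ := h.choose_spec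
    refine congrFun (hc.eq_of_dinf_le _ v hw hv ?_) u
    have := dinf_triangle h.choose u p
    have := dinf_triangle h.choose p v
    rw [dinf_comm] at huw
    linarith
  · by_contra hne
    obtain ⟨w, hw, huw⟩ := hc.exists_near_of_ne v u hv (Ne.symm hne)
    exact h ⟨w, hw, huw⟩

lemma eqOn_patch_zero {k : ℕ} {p : V3} (hfar : ∀ v, P v → n + k < dinf p v) :
    EqOn (patch zB P n c) (fun _ => zB) (cube p k) := by
  intro u (hu : dinf u p ≤ k)
  rw [patch, dif_neg]
  rintro ⟨v, hv, huv⟩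
  have := dinf_triangle p u v
  rw [dinf_comm] at hu
  linarith [hfar v hv]

lemma IsCoherentFamily.patch_mem (hc : IsCoherentFamily Y zB P n r c) (hzY : (fun _ => zB) ∈ Y)
    {m : ℕ} (hm : IsWindowRadius Y m) (hr : 2 * n + 2 * m ≤ r) : patch zB P n c ∈ Y := by
  refine hm _ fun p => ?_
  by_cases h : ∃ v, P v ∧ dinf p v ≤ n + m
  · obtain ⟨v, hv, hpv⟩ := h
    exact ⟨c v, hc.mem v hv, hc.eqOn_patch hr hv hpv⟩
  · push Not at h
    exact ⟨_, hzY, eqOn_patch_zero h⟩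

lemma IsCoherentFamily.mem_image (hc : IsCoherentFamily Y zB P n r c) {zA : A}
    {φ : (V3 → B) → (V3 → A)} (hzY : (fun _ => zB) ∈ Y)
    (hzero : φ (fun _ => zB) = fun _ => zA)
    {m R : ℕ} (hm : IsWindowRadius Y m) (hR : IsLocalRadius φ Y R) (hr : 2 * (m + n + R) ≤ r)
    {t : V3 → A} (hnear : ∀ p v, P v → dinf p v ≤ n + R → φ (c v) p = t p)
    (hfar : ∀ p, t p ≠ zA → P p) : t ∈ φ '' Y := by
  have hmem := hc.patch_mem hzY hm (by omega)
  refine ⟨_, hmem, funext fun p => ?_⟩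
  by_cases h : ∃ v, P v ∧ dinf p v ≤ n + R
  · obtain ⟨v, hv, hpv⟩ := h
    rw [hR p _ hmem _ (hc.mem v hv) (hc.eqOn_patch (by omega) hv hpv), hnear p v hv hpv]
  · push Not at h
    rw [hR p _ hmem _ hzY (eqOn_patch_zero h), hzero]
    by_contra hne
    have := h p (hfar p (Ne.symm hne))
    rw [dinf_self] at this
    omega

end Patch

section Components

variable {A : Type} {zA : A} {r : ℕ} {x : V3 → A}

lemma reach_symm {u w : V3} (h : Reach zA r x u w) : Reach zA r x w u :=
  Relation.ReflTransGen.mono (fun _ _ ⟨hb, ha, hba⟩ => ⟨ha, hb, by rwa [dinf_comm]⟩) _ _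
    (Relation.ReflTransGen.swap w u h)

lemma reach_iff_of_dinf_le {u v w : V3} (hv : x v ≠ zA) (hw : x w ≠ zA) (h : dinf v w ≤ r) :
    Reach zA r x u v ↔ Reach zA r x u w :=
  ⟨fun huv => huv.tail ⟨hv, hw, h⟩, fun huw => huw.tail ⟨hw, hv, by rwa [dinf_comm]⟩⟩

variable (zA r x) in
open Classical in
noncomputable def compConf (v : V3) : V3 → A := fun u =>
  if x u ≠ zA ∧ Reach zA r x v u then x u else zA

lemma isCompConf_compConf {v : V3} (hv : x v ≠ zA) : IsCompConf zA r x (compConf zA r x v) :=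
  ⟨v, hv, fun _ hu => if_pos hu, fun _ hu => if_neg hu⟩

lemma eq_compConf_of_isCompConf {x' : V3 → A} (h : IsCompConf zA r x x') :
    ∃ v, x v ≠ zA ∧ x' = compConf zA r x v := by
  obtain ⟨v, hv, hin, hout⟩ := h
  refine ⟨v, hv, funext fun u => ?_⟩
  unfold compConf
  split_ifs with hu
  exacts [hin u hu, hout u hu]

lemma compConf_eq_of_reach {v w : V3} (h : Reach zA r x v w) :
    compConf zA r x v = compConf zA r x w := by
  classical
  funext u
  exact if_congr (and_congr_right' ⟨(reach_symm h).trans, h.trans⟩) rfl rfl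

lemma ne_zero_of_compConf_ne_zero {v p : V3} (h : compConf zA r x v p ≠ zA) : x p ≠ zA := by
  unfold compConf at h
  split_ifs at h with hp
  exacts [hp.1, absurd rfl h]

lemma compConf_apply_of_dinf_le {v p : V3} (hv : x v ≠ zA) (h : dinf p v ≤ r) :
    compConf zA r x v p = x p := by
  unfold compConf
  split_ifs with hp
  · rfl
  · by_contra hxp
    exact hp ⟨Ne.symm hxp, (reach_iff_of_dinf_le hv (Ne.symm hxp) (by rwa [dinf_comm])).1 .refl⟩

lemma compConf_apply_of_not_reach {v w p : V3} (hv : x v ≠ zA) (h : dinf p v ≤ r)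
    (hwv : ¬ Reach zA r x w v) : compConf zA r x w p = zA :=
  if_neg fun hp => hwv ((reach_iff_of_dinf_le hp.1 hv h).1 hp.2)

end Components

section ZeroGluing

variable {A B : Type} {zA : A} {zB : B} {Y : Set (V3 → B)} {φ : (V3 → B) → (V3 → A)}
  {m n R r : ℕ}

lemma compConf_mem_image (hzY : (fun _ => zB) ∈ Y) (hzero : φ (fun _ => zB) = fun _ => zA)
    (hm : IsWindowRadius Y m) (hR : IsLocalRadius φ Y R) (hn : IsDetectionRadius zA zB φ Y n)
    (hr : 2 * (m + n + R) ≤ r) {x x' : V3 → A} (hx : x ∈ φ '' Y)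
    (hx' : IsCompConf zA r x x') : x' ∈ φ '' Y := by
  classical
  obtain ⟨y, hy, rfl⟩ := hx
  obtain ⟨v₀, -, rfl⟩ := eq_compConf_of_isCompConf hx'
  let c : V3 → V3 → B := fun v => if Reach zA r (φ y) v₀ v then y else fun _ => zB
  have hc : IsCoherentFamily Y zB (φ y · ≠ zA) n r c := by
    refine ⟨fun v _ => ?_, fun v w hv hw hvw => ?_, fun v u _ hu => ?_⟩
    · unfold c; split_ifs <;> assumption
    · simp only [c, reach_iff_of_dinf_le hv hw hvw]
    · have hyu : y u ≠ zB := by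
        unfold c at hu; split_ifs at hu
        exacts [hu, absurd rfl hu]
      obtain ⟨w, hw, hφw⟩ := hn u y hy hyu
      exact ⟨w, hφw, by rw [dinf_comm]; exact hw⟩
  refine hc.mem_image hzY hzero hm hR hr (fun p v hv hpv => ?_)
    fun p hp => ne_zero_of_compConf_ne_zero hp
  have hpv : dinf p v ≤ r := hpv.trans (by omega)
  by_cases hreach : Reach zA r (φ y) v₀ v
  · simp only [c, if_pos hreach, compConf_eq_of_reach hreach, compConf_apply_of_dinf_le hv hpv]
  · simp only [c, if_neg hreach, hzero, compConf_apply_of_not_reach hv hpv hreach]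

lemma mem_image_of_forall_isCompConf (hzY : (fun _ => zB) ∈ Y)
    (hzero : φ (fun _ => zB) = fun _ => zA) (hm : IsWindowRadius Y m) (hR : IsLocalRadius φ Y R)
    (hn : IsDetectionRadius zA zB φ Y n) (hr : 2 * (m + n + R) ≤ r) {x : V3 → A}
    (hall : ∀ x', IsCompConf zA r x x' → x' ∈ φ '' Y) : x ∈ φ '' Y := by
  have : Nonempty (V3 → B) := ⟨fun _ => zB⟩
  let c : V3 → V3 → B := fun v => Function.invFunOn φ Y (compConf zA r x v)
  have hpre : ∀ v, x v ≠ zA → c v ∈ Y ∧ φ (c v) = compConf zA r x v :=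
    fun v hv => Function.invFunOn_pos (hall _ (isCompConf_compConf hv))
  have hc : IsCoherentFamily Y zB (x · ≠ zA) n r c := by
    refine ⟨fun v hv => (hpre v hv).1, fun v w hv hw hvw => ?_, fun v u hv hu => ?_⟩
    · simp only [c, compConf_eq_of_reach (.single ⟨hv, hw, hvw⟩ : Reach zA r x v w)]
    · obtain ⟨w, hw, hφw⟩ := hn u (c v) (hpre v hv).1 hu
      rw [(hpre v hv).2] at hφw
      exact ⟨w, ne_zero_of_compConf_ne_zero hφw, by rw [dinf_comm]; exact hw⟩
  refine hc.mem_image hzY hzero hm hR hr (fun p v hv hpv => ?_) fun _ hp => hp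
  rw [(hpre v hv).2, compConf_apply_of_dinf_le hv (hpv.trans (by omega))]

end ZeroGluing

theorem statement17_general {A B : Type} [Fintype B] (zA : A) (zB : B)
    (Y : Set (V3 → B)) (hY : IsSFT Y) (hzY : (fun _ => zB) ∈ Y)
    (φ : (V3 → B) → (V3 → A))
    (hcont : @ContinuousOn _ _ (prodTop V3 B) (prodTop V3 A) φ Y)
    (hequiv : ∀ v : V3, ∀ y ∈ Y, φ (shift v y) = shift v (φ y))
    (hzero : φ (fun _ => zB) = (fun _ => zA))
    (hinj : ∀ y ∈ Y, φ y = (fun _ => zA) → y = (fun _ => zB)) :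
    ∃ r : ℕ, IsZeroGluing zA r (φ '' Y) := by
  let _ : TopologicalSpace A := ⊥
  have : DiscreteTopology A := ⟨rfl⟩
  let _ : TopologicalSpace B := ⊥
  have : DiscreteTopology B := ⟨rfl⟩
  obtain ⟨m, hm⟩ := hY.exists_isWindowRadius
  obtain ⟨R, hR⟩ := exists_isLocalRadius hY.isClosed hY.shift_mem hcont hequiv
  obtain ⟨n, hn⟩ := exists_isDetectionRadius zA zB hY.isClosed hY.shift_mem hcont hequiv hinj
  exact ⟨2 * (m + n + R), fun x =>
    ⟨fun hx _ hx' => compConf_mem_image hzY hzero hm hR hn le_rfl hx hx',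
      mem_image_of_forall_isCompConf hzY hzero hm hR hn le_rfl⟩⟩

/-- If `X = φ(Y)` is a three-dimensional sofic shift with a 0-to-0 SFT cover
`φ : Y → X`, then `X` is `r`-zero-gluing for some `r ∈ ℕ` (with respect to the
ℓ∞ metric on `ℤ³`). -/
theorem statement17 {A B : Type} [Fintype A] [Fintype B] (zA : A) (zB : B)
    (Y : Set (V3 → B)) (hY : IsSFT Y) (hzY : (fun _ => zB) ∈ Y)
    (φ : (V3 → B) → (V3 → A))
    (hcont : @ContinuousOn _ _ (prodTop V3 B) (prodTop V3 A) φ Y)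
    (hequiv : ∀ v : V3, ∀ y ∈ Y, φ (shift v y) = shift v (φ y))
    (hzero : φ (fun _ => zB) = (fun _ => zA))
    (hinj : ∀ y ∈ Y, φ y = (fun _ => zA) → y = (fun _ => zB)) :
    ∃ r : ℕ, IsZeroGluing zA r (φ '' Y) :=
  statement17_general zA zB Y hY hzY φ hcont hequiv hzero hinj
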